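/- arXiv:1510.03521 — 2 statements merged into one kernel-verified Lean document; each statement's English description precedes it below -/
import Mathlib

section
/- Let β, ζ, h be nonnegative functions on (0,∞) with ζ, h locally integrable, β absolutely continuous on (0,∞), and suppose β'(t) ≤ ζ(t)β(t) + h(t) for almost every t > 0. If there exist a finite time t₁ > 0, a number q > 0, and nonnegative constants A, B, C such that for every t > t₁ one has ∫_t^{t+q} ζ(τ)dτ ≤ A, ∫_t^{t+q} β(τ)dτ ≤ B, and ∫_t^{t+q} h(τ)dτ ≤ C, then β(t) ≤ (B/q + C)·e^A for every t > t₁ + q. -/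
/-!
Pick `s` in the window `[t - q, t]` where `β` is smallest, so that `q β(s) ≤ ∫_{t-q}^t β ≤ B`.
On `[s, t]`, which lies in a window of length `q` starting after `t₁`, the integrating factor
`E(x) = exp (-∫_s^x ζ)` is absolutely continuous with `E' = -ζ E` a.e., so the product rule for
absolutely continuous functions gives `(β E)' ≤ h E ≤ h`. Integrating from `s` to `t` yields
`β(t) ≤ (β(s) + ∫_s^t h) exp (∫_s^t ζ) ≤ (B/q + C) e^A`.
-/

open MeasureTheory intervalIntegral

open Set Filter

theorem LipschitzOnWith.absolutelyContinuousOnInterval_comp {X Y : Type*} [PseudoMetricSpace X]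
    [PseudoMetricSpace Y] {φ : X → Y} {f : ℝ → X} {K : NNReal} {s : Set X} {a b : ℝ}
    (hφ : LipschitzOnWith K φ s) (hf : AbsolutelyContinuousOnInterval f a b)
    (hfs : MapsTo f (uIcc a b) s) : AbsolutelyContinuousOnInterval (φ ∘ f) a b := by
  unfold AbsolutelyContinuousOnInterval at hf ⊢
  have hKf := hf.const_mul (K : ℝ)
  rw [mul_zero] at hKf
  refine squeeze_zero' (Eventually.of_forall fun _ ↦ Finset.sum_nonneg fun _ _ ↦ dist_nonneg)
    ?_ hKf
  refine eventually_inf_principal.2 (Eventually.of_forall fun E hE ↦ ?_)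
  rw [Finset.mul_sum]
  exact Finset.sum_le_sum fun i hi ↦
    hφ.dist_le_mul _ (hfs (hE.1 i hi).1) _ (hfs (hE.1 i hi).2)

theorem ContDiff.comp_absolutelyContinuousOnInterval {E F : Type*} [NormedAddCommGroup E]
    [NormedSpace ℝ E] [ProperSpace E] [NormedAddCommGroup F] [NormedSpace ℝ F]
    {φ : E → F} {f : ℝ → E} {a b : ℝ} (hφ : ContDiff ℝ 1 φ)
    (hf : AbsolutelyContinuousOnInterval f a b) : AbsolutelyContinuousOnInterval (φ ∘ f) a b := by
  obtain ⟨C, hC⟩ := hf.exists_bound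
  obtain ⟨K, hK⟩ := hφ.contDiffOn.exists_lipschitzOnWith one_ne_zero (convex_closedBall 0 C)
    (isCompact_closedBall 0 C)
  exact hK.absolutelyContinuousOnInterval_comp hf fun x hx ↦ mem_closedBall_zero_iff.2 (hC x hx)

theorem IntervalIntegrable.absolutelyContinuousOnInterval_const_add_integral {f : ℝ → ℝ}
    {a b : ℝ} (hf : IntervalIntegrable f volume a b) (c : ℝ) :
    AbsolutelyContinuousOnInterval (fun x ↦ c + ∫ τ in a..x, f τ) a b :=
  contDiffOn_const.absolutelyContinuousOnInterval.add
    (hf.absolutelyContinuousOnInterval_intervalIntegral left_mem_uIcc)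

theorem MeasureTheory.LocallyIntegrableOn.intervalIntegrable_of_lt_of_le {E : Type*}
    [NormedAddCommGroup E] {μ : Measure ℝ} [IsLocallyFiniteMeasure μ] {f : ℝ → E} {a b c : ℝ}
    (hf : LocallyIntegrableOn f (Ioi c) μ) (hca : c < a) (hab : a ≤ b) :
    IntervalIntegrable f μ a b :=
  (hf.integrableOn_compact_subset (uIcc_of_le hab ▸ (Icc_subset_Ioi_iff hab).2 hca)
    isCompact_uIcc).intervalIntegrable

theorem exists_mem_Icc_mul_le_integral {f : ℝ → ℝ} {a b : ℝ} (hab : a ≤ b)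
    (hf : ContinuousOn f (Icc a b)) : ∃ c ∈ Icc a b, (b - a) * f c ≤ ∫ x in a..b, f x := by
  obtain ⟨c, hc, hmin⟩ := isCompact_Icc.exists_isMinOn (nonempty_Icc.2 hab) hf
  refine ⟨c, hc, ?_⟩
  have := integral_mono_on hab intervalIntegrable_const
    (hf.intervalIntegrable_of_Icc (μ := volume) hab) fun x hx ↦ hmin hx
  simpa [mul_comm] using this

theorem AbsolutelyContinuousOnInterval.mul_exp_neg_integral_le_of_ae_deriv_le
    {f ζ h : ℝ → ℝ} {a b : ℝ} (hab : a ≤ b) (hf : AbsolutelyContinuousOnInterval f a b)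
    (hζ : IntervalIntegrable ζ volume a b) (hh : IntervalIntegrable h volume a b)
    (hle : ∀ᵐ x, x ∈ Icc a b → deriv f x ≤ ζ x * f x + h x) :
    f b * Real.exp (-∫ τ in a..b, ζ τ) ≤ f a + ∫ x in a..b, h x * Real.exp (-∫ τ in a..x, ζ τ) := by
  set E : ℝ → ℝ := fun x ↦ Real.exp (-∫ τ in a..x, ζ τ)
  have hE : AbsolutelyContinuousOnInterval E a b :=
    Real.contDiff_exp.comp_absolutelyContinuousOnInterval
      (hζ.absolutelyContinuousOnInterval_intervalIntegral left_mem_uIcc).neg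
  have hE' : ∀ᵐ x, x ∈ Icc a b → deriv E x = -(ζ x * E x) := by
    filter_upwards [hζ.ae_hasDerivAt_integral] with x hx hxab
    rw [← uIcc_of_le hab] at hxab
    simpa [E, mul_comm] using ((hx hxab a left_mem_uIcc).neg.exp).deriv
  have hparts := hf.integral_deriv_mul_eq_sub hE
  have hmono : ∫ x in a..b, deriv f x * E x + f x * deriv E x ≤ ∫ x in a..b, h x * E x := by
    refine integral_mono_ae_restrict hab ?_ (hh.mul_continuousOn hE.continuousOn) ?_
    · exact (hf.intervalIntegrable_deriv.mul_continuousOn hE.continuousOn).add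
        (hE.intervalIntegrable_deriv.continuousOn_mul hf.continuousOn)
    · filter_upwards [ae_restrict_of_ae hle, ae_restrict_of_ae hE',
        ae_restrict_mem measurableSet_Icc] with x hx hEx hmem
      rw [hEx hmem]
      nlinarith [hx hmem, Real.exp_pos (-∫ τ in a..x, ζ τ)]
  simp only [E, integral_same, neg_zero, Real.exp_zero, mul_one] at hparts hmono ⊢
  linarith

theorem AbsolutelyContinuousOnInterval.le_add_integral_mul_exp_integral_of_ae_deriv_le
    {f ζ h : ℝ → ℝ} {a b : ℝ} (hab : a ≤ b) (hf : AbsolutelyContinuousOnInterval f a b)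
    (hζ : IntervalIntegrable ζ volume a b) (hh : IntervalIntegrable h volume a b)
    (hζ₀ : ∀ x ∈ Icc a b, 0 ≤ ζ x) (hh₀ : ∀ x ∈ Icc a b, 0 ≤ h x)
    (hle : ∀ᵐ x, x ∈ Icc a b → deriv f x ≤ ζ x * f x + h x) :
    f b ≤ (f a + ∫ x in a..b, h x) * Real.exp (∫ x in a..b, ζ x) := by
  have hfactor : ∫ x in a..b, h x * Real.exp (-∫ τ in a..x, ζ τ) ≤ ∫ x in a..b, h x := by
    refine integral_mono_on hab (hh.mul_continuousOn ?_) hh fun x hx ↦ ?_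
    · exact (hζ.absolutelyContinuousOnInterval_intervalIntegral left_mem_uIcc).continuousOn.neg.rexp
    · refine mul_le_of_le_one_right (hh₀ x hx) (Real.exp_le_one_iff.2 (neg_nonpos.2 ?_))
      exact integral_nonneg hx.1 fun y hy ↦ hζ₀ y ⟨hy.1, hy.2.trans hx.2⟩
  calc f b = f b * Real.exp (-∫ x in a..b, ζ x) * Real.exp (∫ x in a..b, ζ x) := by
        rw [mul_assoc, ← Real.exp_add, neg_add_cancel, Real.exp_zero, mul_one]
    _ ≤ (f a + ∫ x in a..b, h x) * Real.exp (∫ x in a..b, ζ x) := by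
        gcongr
        exact (hf.mul_exp_neg_integral_le_of_ae_deriv_le hab hζ hh hle).trans (by linarith)

theorem le_add_integral_mul_exp_integral_of_eq_add_integral {f f' ζ h : ℝ → ℝ} {a b : ℝ}
    (hab : a ≤ b) (hf' : IntervalIntegrable f' volume a b)
    (hf : ∀ x ∈ Icc a b, f x = f a + ∫ τ in a..x, f' τ)
    (hζ : IntervalIntegrable ζ volume a b) (hh : IntervalIntegrable h volume a b)
    (hζ₀ : ∀ x ∈ Icc a b, 0 ≤ ζ x) (hh₀ : ∀ x ∈ Icc a b, 0 ≤ h x)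
    (hle : ∀ᵐ x, x ∈ Icc a b → f' x ≤ ζ x * f x + h x) :
    f b ≤ (f a + ∫ x in a..b, h x) * Real.exp (∫ x in a..b, ζ x) := by
  have hderiv : ∀ᵐ x, x ∈ Icc a b →
      deriv (fun x ↦ f a + ∫ τ in a..x, f' τ) x ≤ ζ x * (f a + ∫ τ in a..x, f' τ) + h x := by
    filter_upwards [hle, hf'.ae_hasDerivAt_integral] with x hx hx' hmem
    rw [((hx' (uIcc_of_le hab ▸ hmem) a left_mem_uIcc).const_add (f a)).deriv, ← hf x hmem]
    exact hx hmem
  have := (hf'.absolutelyContinuousOnInterval_const_add_integral (f a)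
    ).le_add_integral_mul_exp_integral_of_ae_deriv_le hab hζ hh hζ₀ hh₀ hderiv
  rwa [← hf b (right_mem_Icc.2 hab), integral_same, add_zero] at this

theorem continuousOn_Icc_of_eq_add_integral {f f' : ℝ → ℝ} {a b : ℝ} (hab : a ≤ b)
    (hf' : IntervalIntegrable f' volume a b) (hf : ∀ x ∈ Icc a b, f x = f a + ∫ τ in a..x, f' τ) :
    ContinuousOn f (Icc a b) := by
  have := (hf'.absolutelyContinuousOnInterval_const_add_integral (f a)).continuousOn
  rw [uIcc_of_le hab] at this
  exact this.congr hf

/-- Absolute continuity of `β` on `(0,∞)` is encoded by the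
fundamental theorem of calculus identity with a locally integrable derivative `β'`. -/
theorem uniform_gronwall_lemma_general
    (β β' ζ h : ℝ → ℝ)
    (hβnn : ∀ t : ℝ, 0 < t → 0 ≤ β t)
    (hζnn : ∀ t : ℝ, 0 < t → 0 ≤ ζ t)
    (hhnn : ∀ t : ℝ, 0 < t → 0 ≤ h t)
    (hζloc : LocallyIntegrableOn ζ (Set.Ioi 0))
    (hhloc : LocallyIntegrableOn h (Set.Ioi 0))
    (hβ'loc : LocallyIntegrableOn β' (Set.Ioi 0))
    (hAC : ∀ a b : ℝ, 0 < a → a ≤ b → β b - β a = ∫ τ in a..b, β' τ)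
    (hineq : ∀ᵐ t ∂(volume : Measure ℝ), 0 < t → β' t ≤ ζ t * β t + h t)
    (t₁ q A B C : ℝ)
    (ht₁ : 0 < t₁) (hq : 0 < q)
    (hζA : ∀ t : ℝ, t₁ < t → (∫ τ in t..(t + q), ζ τ) ≤ A)
    (hβB : ∀ t : ℝ, t₁ < t → (∫ τ in t..(t + q), β τ) ≤ B)
    (hhC : ∀ t : ℝ, t₁ < t → (∫ τ in t..(t + q), h τ) ≤ C) :
    ∀ t : ℝ, t₁ + q < t → β t ≤ (B / q + C) * Real.exp A := by
  have hβ_eq : ∀ {a b : ℝ}, 0 < a → a ≤ b → ∀ x ∈ Icc a b, β x = β a + ∫ τ in a..x, β' τ :=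
    fun ha _ x hx ↦ by linarith [hAC _ x ha hx.1]
  intro t ht
  obtain ⟨u, rfl⟩ : ∃ u, t = u + q := ⟨t - q, by ring⟩
  have hu₁ : t₁ < u := by linarith
  have hu₀ : 0 < u := ht₁.trans hu₁
  have huq : u ≤ u + q := by linarith
  obtain ⟨s, hs, hβs⟩ := exists_mem_Icc_mul_le_integral huq <| continuousOn_Icc_of_eq_add_integral
    huq (hβ'loc.intervalIntegrable_of_lt_of_le hu₀ huq) (hβ_eq hu₀ huq)
  rw [add_sub_cancel_left] at hβs
  have hs₁ : t₁ < s := hu₁.trans_le hs.1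
  have hs₀ : 0 < s := hu₀.trans_le hs.1
  have hpos : ∀ x ∈ Icc s (u + q), 0 < x := fun x hx ↦ hs₀.trans_le hx.1
  have hwindow : ∀ {f : ℝ → ℝ}, (∀ x, 0 < x → 0 ≤ f x) → LocallyIntegrableOn f (Ioi 0) →
      ∫ τ in s..(u + q), f τ ≤ ∫ τ in s..(s + q), f τ := fun hf₀ hf ↦
    integral_mono_interval le_rfl hs.2 (by linarith [hs.1])
      ((ae_restrict_mem measurableSet_Ioc).mono fun x hx ↦ hf₀ x (hs₀.trans hx.1))
      (hf.intervalIntegrable_of_lt_of_le hs₀ (by linarith))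
  calc β (u + q) ≤ (β s + ∫ τ in s..(u + q), h τ) * Real.exp (∫ τ in s..(u + q), ζ τ) :=
        le_add_integral_mul_exp_integral_of_eq_add_integral hs.2
          (hβ'loc.intervalIntegrable_of_lt_of_le hs₀ hs.2) (hβ_eq hs₀ hs.2)
          (hζloc.intervalIntegrable_of_lt_of_le hs₀ hs.2)
          (hhloc.intervalIntegrable_of_lt_of_le hs₀ hs.2)
          (fun x hx ↦ hζnn x (hpos x hx)) (fun x hx ↦ hhnn x (hpos x hx))
          (hineq.mono fun x hx hmem ↦ hx (hpos x hmem))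
    _ ≤ (B / q + C) * Real.exp A :=
        mul_le_mul_of_nonneg
          (add_le_add ((le_div_iff₀' hq).2 (hβs.trans (hβB u hu₁)))
            ((hwindow hhnn hhloc).trans (hhC s hs₁)))
          (Real.exp_le_exp.2 ((hwindow hζnn hζloc).trans (hζA s hs₁)))
          (add_nonneg (hβnn s hs₀) (integral_nonneg hs.2 fun x hx ↦ hhnn x (hpos x hx)))
          (Real.exp_pos A).le

/-- **Uniform Gronwall Lemma.** Absolute continuity of `β` on `(0,∞)` is encoded by the
fundamental theorem of calculus identity with a locally integrable derivative `β'`. -/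
theorem uniform_gronwall_lemma
    (β β' ζ h : ℝ → ℝ)
    (hβnn : ∀ t : ℝ, 0 < t → 0 ≤ β t)
    (hζnn : ∀ t : ℝ, 0 < t → 0 ≤ ζ t)
    (hhnn : ∀ t : ℝ, 0 < t → 0 ≤ h t)
    (hζloc : LocallyIntegrableOn ζ (Set.Ioi 0))
    (hhloc : LocallyIntegrableOn h (Set.Ioi 0))
    (hβ'loc : LocallyIntegrableOn β' (Set.Ioi 0))
    (hAC : ∀ a b : ℝ, 0 < a → a ≤ b → β b - β a = ∫ τ in a..b, β' τ)
    (hineq : ∀ᵐ t ∂(volume : Measure ℝ), 0 < t → β' t ≤ ζ t * β t + h t)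
    (t₁ q A B C : ℝ)
    (ht₁ : 0 < t₁) (hq : 0 < q)
    (hA : 0 ≤ A) (hB : 0 ≤ B) (hC : 0 ≤ C)
    (hζA : ∀ t : ℝ, t₁ < t → (∫ τ in t..(t + q), ζ τ) ≤ A)
    (hβB : ∀ t : ℝ, t₁ < t → (∫ τ in t..(t + q), β τ) ≤ B)
    (hhC : ∀ t : ℝ, t₁ < t → (∫ τ in t..(t + q), h τ) ≤ C) :
    ∀ t : ℝ, t₁ + q < t → β t ≤ (B / q + C) * Real.exp A :=
  uniform_gronwall_lemma_general β β' ζ h hβnn hζnn hhnn hζloc hhloc hβ'loc hAC hineq t₁ q A B C ht₁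
    hq hζA hβB hhC
end

section
/- Let m, c, w₄, D₃ be positive constants and let r : [0,∞) → ℝ be differentiable with r'(t) = r(t)(r(t) − m)(c − w₄·r(t)/D₃) for all t ≥ 0. If r(0) > min(m, c·D₃/w₄), then r(t) → max(m, c·D₃/w₄) as t → ∞. -/
/-!
Write `F` for the right-hand side and `K = c D₃ / w₄`, so that
`F x = (w₄ / D₃) x (x − m) (K − x)`: the two positive equilibria are `m` and `K`, `F > 0`
strictly between them and `F < 0` beyond the larger one. Since `F` is locally Lipschitz,
solutions cannot cross an equilibrium, so a solution starting in `(min m K, max m K]` stays there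
and increases, while one starting above `max m K` stays above it and decreases. In either case it
converges, and by the mean value theorem the limit is an equilibrium; the only one available is
`max m K`.
-/

open Set Filter Topology

theorem MonotoneOn.exists_tendsto_atTop {α β : Type*} [Preorder α] [IsDirectedOrder α]
    [ConditionallyCompleteLinearOrder β] [TopologicalSpace β] [OrderTopology β]
    {f : α → β} {a : α} (hf : MonotoneOn f (Ici a)) (hb : BddAbove (f '' Ici a)) :
    ∃ L, Tendsto f atTop (𝓝 L) := by
  rw [image_eq_range] at hb
  exact ⟨_, tendsto_comp_val_Ici_atTop.mp
    (tendsto_atTop_ciSup (monotoneOn_iff_monotone.mp hf) hb)⟩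

theorem AntitoneOn.exists_tendsto_atTop {α β : Type*} [Preorder α] [IsDirectedOrder α]
    [ConditionallyCompleteLinearOrder β] [TopologicalSpace β] [OrderTopology β]
    {f : α → β} {a : α} (hf : AntitoneOn f (Ici a)) (hb : BddBelow (f '' Ici a)) :
    ∃ L, Tendsto f atTop (𝓝 L) := by
  rw [image_eq_range] at hb
  exact ⟨_, tendsto_comp_val_Ici_atTop.mp
    (tendsto_atTop_ciInf (antitoneOn_iff_antitone.mp hf) hb)⟩

def IsForwardSolution (F r : ℝ → ℝ) : Prop :=
  ∀ t ∈ Ici (0 : ℝ), HasDerivWithinAt r (F (r t)) (Ici 0) t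

namespace IsForwardSolution

variable {F r : ℝ → ℝ} {M t : ℝ}

theorem continuousOn (h : IsForwardSolution F r) : ContinuousOn r (Ici 0) :=
  fun t ht => (h t ht).continuousWithinAt

theorem hasDerivWithinAt_Ici (h : IsForwardSolution F r) (ht : 0 ≤ t) :
    HasDerivWithinAt r (F (r t)) (Ici t) t :=
  (h t ht).mono (Ici_subset_Ici.mpr ht)

theorem hasDerivAt (h : IsForwardSolution F r) (ht : 0 < t) : HasDerivAt r (F (r t)) t :=
  (h t ht.le).hasDerivAt (Ici_mem_nhds ht)

theorem apply_eq_of_apply_eq_of_le (h : IsForwardSolution F r) (hF : LocallyLipschitz F)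
    (hM : F M = 0) {s : ℝ} (hs : 0 ≤ s) (hst : s ≤ t) (hrs : r s = M) : r t = M := by
  have hcont : ContinuousOn r (Icc s t) := h.continuousOn.mono fun τ hτ => hs.trans hτ.1
  obtain ⟨K, hK⟩ := hF.locallyLipschitzOn.exists_lipschitzOnWith_of_compact
    (isCompact_Icc.image_of_continuousOn hcont)
  refine ODE_solution_unique_of_mem_Icc_right (v := fun _ => F) (s := fun _ => r '' Icc s t)
    (fun _ _ => hK) hcont (fun τ hτ => h.hasDerivWithinAt_Ici (hs.trans hτ.1))
    (fun τ hτ => mem_image_of_mem r (Ico_subset_Icc_self hτ)) continuousOn_const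
    (fun _ _ => by simpa only [hM] using hasDerivWithinAt_const _ _ M)
    (fun _ _ => ⟨s, left_mem_Icc.mpr hst, hrs⟩) hrs (right_mem_Icc.mpr hst)

theorem le_apply_of_le_apply_zero (h : IsForwardSolution F r) (hF : LocallyLipschitz F)
    (hM : F M = 0) (h0 : M ≤ r 0) (ht : 0 ≤ t) : M ≤ r t := by
  by_contra! hlt
  obtain ⟨s, hs, hrs⟩ :=
    intermediate_value_Icc' ht (h.continuousOn.mono Icc_subset_Ici_self) ⟨hlt.le, h0⟩
  exact hlt.ne (h.apply_eq_of_apply_eq_of_le hF hM hs.1 hs.2 hrs)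

theorem apply_le_of_apply_zero_le (h : IsForwardSolution F r) (hF : LocallyLipschitz F)
    (hM : F M = 0) (h0 : r 0 ≤ M) (ht : 0 ≤ t) : r t ≤ M := by
  by_contra! hlt
  obtain ⟨s, hs, hrs⟩ :=
    intermediate_value_Icc ht (h.continuousOn.mono Icc_subset_Ici_self) ⟨h0, hlt.le⟩
  exact hlt.ne' (h.apply_eq_of_apply_eq_of_le hF hM hs.1 hs.2 hrs)

theorem monotoneOn (h : IsForwardSolution F r) (hF : ∀ t, 0 < t → 0 ≤ F (r t)) :
    MonotoneOn r (Ici 0) :=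
  monotoneOn_of_hasDerivWithinAt_nonneg (convex_Ici 0) h.continuousOn
    (fun t ht => (h.hasDerivAt (by simpa using ht)).hasDerivWithinAt)
    (fun t ht => hF t (by simpa using ht))

theorem antitoneOn (h : IsForwardSolution F r) (hF : ∀ t, 0 < t → F (r t) ≤ 0) :
    AntitoneOn r (Ici 0) :=
  antitoneOn_of_hasDerivWithinAt_nonpos (convex_Ici 0) h.continuousOn
    (fun t ht => (h.hasDerivAt (by simpa using ht)).hasDerivWithinAt)
    (fun t ht => hF t (by simpa using ht))

theorem apply_eq_zero_of_tendsto (h : IsForwardSolution F r) {L : ℝ} (hF : ContinuousAt F L)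
    (hL : Tendsto r atTop (𝓝 L)) : F L = 0 := by
  have hn : Tendsto (fun n : ℕ => (n : ℝ)) atTop atTop := tendsto_natCast_atTop_atTop
  choose ξ hξ hslope using fun n : ℕ =>
    exists_hasDerivAt_eq_slope r (F ∘ r) (lt_add_one (n : ℝ))
      (h.continuousOn.mono fun τ hτ => (Nat.cast_nonneg n).trans hτ.1)
      fun τ hτ => h.hasDerivAt ((Nat.cast_nonneg n).trans_lt hτ.1)
  have hξ_top : Tendsto ξ atTop atTop := tendsto_atTop_mono (fun n => (hξ n).1.le) hn
  have hlim : Tendsto (fun n : ℕ => r (n + 1) - r n) atTop (𝓝 (L - L)) :=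
    (hL.comp (tendsto_atTop_add_const_right _ 1 hn)).sub (hL.comp hn)
  refine sub_self L ▸
    tendsto_nhds_unique (hF.tendsto.comp (hL.comp hξ_top)) (hlim.congr fun n => ?_)
  simpa using (hslope n).symm

theorem tendsto_of_mem_Ioc_of_pos (h : IsForwardSolution F r) (hF : LocallyLipschitz F) {μ : ℝ}
    (hμ : F μ = 0) (hM : F M = 0) (hpos : ∀ x ∈ Ioo μ M, 0 < F x) (h0 : r 0 ∈ Ioc μ M) :
    Tendsto r atTop (𝓝 M) := by
  have hbound : ∀ t, 0 ≤ t → r t ∈ Icc μ M := fun t ht =>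
    ⟨h.le_apply_of_le_apply_zero hF hμ h0.1.le ht, h.apply_le_of_apply_zero_le hF hM h0.2 ht⟩
  have hmono : MonotoneOn r (Ici 0) := h.monotoneOn fun t ht => by
    obtain ⟨hμt, htM⟩ := hbound t ht.le
    rcases hμt.eq_or_lt with hμt | hμt
    · rw [← hμt, hμ]
    rcases htM.eq_or_lt with htM | htM
    · rw [htM, hM]
    exact (hpos _ ⟨hμt, htM⟩).le
  obtain ⟨L, hL⟩ :=
    hmono.exists_tendsto_atTop ⟨M, forall_mem_image.mpr fun t ht => (hbound t ht).2⟩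
  have hr0L : r 0 ≤ L :=
    ge_of_tendsto hL ((eventually_ge_atTop 0).mono fun t ht => hmono self_mem_Ici ht ht)
  have hLM : L ≤ M := le_of_tendsto hL ((eventually_ge_atTop 0).mono fun t ht => (hbound t ht).2)
  obtain rfl | hLM := hLM.eq_or_lt
  · exact hL
  · exact absurd (h.apply_eq_zero_of_tendsto hF.continuous.continuousAt hL)
      (hpos L ⟨h0.1.trans_le hr0L, hLM⟩).ne'

theorem tendsto_of_le_of_neg (h : IsForwardSolution F r) (hF : LocallyLipschitz F)
    (hM : F M = 0) (hneg : ∀ x, M < x → F x < 0) (h0 : M ≤ r 0) :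
    Tendsto r atTop (𝓝 M) := by
  have hbound : ∀ t, 0 ≤ t → M ≤ r t := fun t ht => h.le_apply_of_le_apply_zero hF hM h0 ht
  have hanti : AntitoneOn r (Ici 0) := h.antitoneOn fun t ht => by
    rcases (hbound t ht.le).eq_or_lt with hMt | hMt
    · rw [← hMt, hM]
    · exact (hneg _ hMt).le
  obtain ⟨L, hL⟩ := hanti.exists_tendsto_atTop ⟨M, forall_mem_image.mpr hbound⟩
  have hML : M ≤ L := ge_of_tendsto hL ((eventually_ge_atTop 0).mono hbound)
  obtain rfl | hML := hML.eq_or_lt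
  · exact hL
  · exact absurd (h.apply_eq_zero_of_tendsto hF.continuous.continuousAt hL) (hneg L hML).ne

end IsForwardSolution

theorem sub_mul_sub_pos_of_mem_Ioo_min_max {α : Type*} [CommRing α] [LinearOrder α]
    [IsStrictOrderedRing α] {a b x : α} (hx : x ∈ Ioo (min a b) (max a b)) :
    0 < (x - a) * (b - x) := by
  rcases le_total a b with hab | hab
  · rw [min_eq_left hab, max_eq_right hab] at hx
    exact mul_pos (sub_pos.mpr hx.1) (sub_pos.mpr hx.2)
  · rw [min_eq_right hab, max_eq_left hab] at hx
    exact mul_pos_of_neg_of_neg (sub_neg.mpr hx.2) (sub_neg.mpr hx.1)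

noncomputable def topPredatorRate (m c w₄ D₃ x : ℝ) : ℝ :=
  x * (x - m) * (c - w₄ * x / D₃)

section topPredatorRate

variable {m c w₄ D₃ x : ℝ}

theorem topPredatorRate_eq (hw₄ : w₄ ≠ 0) (hD₃ : D₃ ≠ 0) :
    topPredatorRate m c w₄ D₃ x = w₄ / D₃ * x * ((x - m) * (c * D₃ / w₄ - x)) := by
  unfold topPredatorRate
  field_simp

theorem topPredatorRate_eq_zero (hw₄ : w₄ ≠ 0) (hD₃ : D₃ ≠ 0)
    (hx : x = m ∨ x = c * D₃ / w₄) :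
    topPredatorRate m c w₄ D₃ x = 0 := by
  rcases hx with rfl | rfl <;> simp [topPredatorRate_eq hw₄ hD₃]

theorem topPredatorRate_pos (hm : 0 < m) (hc : 0 < c) (hw₄ : 0 < w₄) (hD₃ : 0 < D₃)
    (hx : x ∈ Ioo (min m (c * D₃ / w₄)) (max m (c * D₃ / w₄))) :
    0 < topPredatorRate m c w₄ D₃ x := by
  have hx0 : 0 < x := (lt_min hm (by positivity)).trans hx.1
  rw [topPredatorRate_eq hw₄.ne' hD₃.ne']
  exact mul_pos (by positivity) (sub_mul_sub_pos_of_mem_Ioo_min_max hx)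

theorem topPredatorRate_neg (hm : 0 < m) (hw₄ : 0 < w₄) (hD₃ : 0 < D₃)
    (hx : max m (c * D₃ / w₄) < x) : topPredatorRate m c w₄ D₃ x < 0 := by
  have hmx : m < x := (le_max_left _ _).trans_lt hx
  have hx0 : 0 < x := hm.trans hmx
  rw [topPredatorRate_eq hw₄.ne' hD₃.ne']
  exact mul_neg_of_pos_of_neg (by positivity)
    (mul_neg_of_pos_of_neg (sub_pos.mpr hmx) (sub_neg.mpr ((le_max_right _ _).trans_lt hx)))

theorem locallyLipschitz_topPredatorRate : LocallyLipschitz (topPredatorRate m c w₄ D₃) :=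
  ContDiff.locallyLipschitz (𝕂 := ℝ) (by unfold topPredatorRate; fun_prop)

end topPredatorRate

/-- Persistence of the top predator: for the scalar ODE
`r' = r(r − m)(c − w₄ r/D₃)` with positive parameters, any solution starting above
`min(m, c D₃/w₄)` tends to `max(m, c D₃/w₄)` as `t → ∞`. -/
theorem top_predator_persistence
    (m c w₄ D₃ : ℝ) (hm : 0 < m) (hc : 0 < c) (hw₄ : 0 < w₄) (hD₃ : 0 < D₃)
    (r : ℝ → ℝ)
    (hode : ∀ t ∈ Set.Ici (0 : ℝ),
      HasDerivWithinAt r (r t * (r t - m) * (c - w₄ * r t / D₃)) (Set.Ici 0) t)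
    (h0 : min m (c * D₃ / w₄) < r 0) :
    Filter.Tendsto r Filter.atTop (nhds (max m (c * D₃ / w₄))) := by
  have hsol : IsForwardSolution (topPredatorRate m c w₄ D₃) r := hode
  have hM := topPredatorRate_eq_zero hw₄.ne' hD₃.ne' (max_choice m (c * D₃ / w₄))
  rcases le_total (r 0) (max m (c * D₃ / w₄)) with hle | hge
  · exact hsol.tendsto_of_mem_Ioc_of_pos locallyLipschitz_topPredatorRate
      (topPredatorRate_eq_zero hw₄.ne' hD₃.ne' (min_choice m _)) hM
      (fun _ hx => topPredatorRate_pos hm hc hw₄ hD₃ hx) ⟨h0, hle⟩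
  · exact hsol.tendsto_of_le_of_neg locallyLipschitz_topPredatorRate hM
      (fun _ hx => topPredatorRate_neg hm hw₄ hD₃ hx) hge
end
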